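/- arXiv:quant-ph/0609229 — 6 statements merged into one kernel-verified Lean document; each statement's English description precedes it below -/
import Mathlib

section
/- Let D be a d×d complex matrix with 0 ≤ D ≤ 1 in the Loewner order and tr(D) ≤ 1, and let q₁, q₂ be orthogonal projections in M_d(ℂ) with tr(D q₁) = 1 − ε₁ and tr(D q₂) = 1 − ε₂ (note ε₂ ≥ 0 automatically). Then tr(D q₂ q₁ q₂) ≥ 1 − ε₁ − 2·√ε₂. (In particular tr(D q₂ q₁ q₂) is a nonnegative real number since q₂ q₁ q₂ ≥ 0.) -/
open scoped ComplexOrder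
open Matrix

/-!
A positive semidefinite `D` turns `‖X‖ = √(re tr (X D Xᴴ))` into a seminorm on matrices, for
which left multiplication by an orthogonal projection is a contraction. In this seminorm
`tr (D q₂ q₁ q₂) = ‖q₁ q₂‖²`, `tr (D q₁) = ‖q₁‖² ≤ tr D ≤ 1` and
`‖1 - q₂‖² = tr D - tr (D q₂) ≤ ε₂`, so the triangle inequality
`‖q₁‖ ≤ ‖q₁ q₂‖ + ‖q₁ (1 - q₂)‖ ≤ ‖q₁ q₂‖ + √ε₂` gives the bound after squaring.
-/

theorem sq_sub_two_mul_le_sq {x y z : ℝ} (hx₀ : 0 ≤ x) (hx₁ : x ^ 2 ≤ 1) (hy : 0 ≤ y)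
    (hz : 0 ≤ z) (hxyz : x - y ≤ z) : x ^ 2 - 2 * y ≤ z ^ 2 := by
  have hx_le_one : x ≤ 1 := by nlinarith
  rcases le_total x y with hxy | hyx
  · nlinarith
  · nlinarith [mul_le_mul hxyz hxyz (sub_nonneg.2 hyx) hz]

variable {n 𝕜 : Type*} [Fintype n] [RCLike 𝕜]

namespace IsStarProjection

variable {q : Matrix n n 𝕜} (hq : IsStarProjection q)
include hq

lemma conjTranspose_eq : qᴴ = q :=
  hq.isSelfAdjoint.star_eq

lemma trace_mul_mul_self (A : Matrix n n 𝕜) : (q * A * q).trace = (A * q).trace := by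
  rw [trace_mul_cycle, hq.isIdempotentElem.eq, trace_mul_comm]

lemma re_trace_mul_mul_self_le [DecidableEq n] {A : Matrix n n 𝕜} (hA : A.PosSemidef) :
    RCLike.re (q * A * q).trace ≤ RCLike.re A.trace := by
  have hp := hq.one_sub
  have h := (hA.conjTranspose_mul_mul_same (1 - q)).trace_nonneg
  rw [hp.conjTranspose_eq, hp.trace_mul_mul_self, mul_sub, mul_one, trace_sub,
    ← hq.trace_mul_mul_self] at h
  simpa using (RCLike.nonneg_iff.1 h).1

end IsStarProjection

namespace Matrix.PosSemidef

variable {M : Matrix n n 𝕜} (hM : M.PosSemidef)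
include hM

lemma norm_sq_eq_re_trace (X : Matrix n n 𝕜) :
    letI := M.toMatrixSeminormedAddCommGroup hM
    ‖X‖ ^ 2 = RCLike.re (X * M * Xᴴ).trace := by
  let := M.toMatrixSeminormedAddCommGroup hM
  let := M.toMatrixInnerProductSpace hM
  rw [← @inner_self_eq_norm_sq 𝕜]
  rfl

lemma norm_sq_of_isStarProjection {q : Matrix n n 𝕜} (hq : IsStarProjection q) :
    letI := M.toMatrixSeminormedAddCommGroup hM
    ‖q‖ ^ 2 = RCLike.re (M * q).trace := by
  rw [hM.norm_sq_eq_re_trace, hq.conjTranspose_eq, hq.trace_mul_mul_self]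

variable [DecidableEq n]

lemma norm_mul_le_of_isStarProjection {q : Matrix n n 𝕜} (hq : IsStarProjection q)
    (X : Matrix n n 𝕜) :
    letI := M.toMatrixSeminormedAddCommGroup hM
    ‖q * X‖ ≤ ‖X‖ := by
  let := M.toMatrixSeminormedAddCommGroup hM
  rw [← sq_le_sq₀ (norm_nonneg _) (norm_nonneg _), hM.norm_sq_eq_re_trace,
    hM.norm_sq_eq_re_trace, conjTranspose_mul, hq.conjTranspose_eq]
  simpa only [mul_assoc] using hq.re_trace_mul_mul_self_le (hM.mul_mul_conjTranspose_same X)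

lemma norm_sq_le_re_trace_of_isStarProjection {q : Matrix n n 𝕜} (hq : IsStarProjection q) :
    letI := M.toMatrixSeminormedAddCommGroup hM
    ‖q‖ ^ 2 ≤ RCLike.re M.trace := by
  let := M.toMatrixSeminormedAddCommGroup hM
  have h := hM.norm_mul_le_of_isStarProjection hq 1
  rw [mul_one] at h
  simpa [hM.norm_sq_of_isStarProjection (.one _)] using pow_le_pow_left₀ (norm_nonneg _) h 2

end Matrix.PosSemidef

theorem trace_pinching_bound_general {d : ℕ} (D q₁ q₂ : Matrix (Fin d) (Fin d) ℂ) (ε₁ ε₂ : ℝ)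
    (hD : D.PosSemidef)
    (htrD : D.trace.re ≤ 1)
    (hq₁herm : q₁.IsHermitian) (hq₁idem : q₁ * q₁ = q₁)
    (hq₂herm : q₂.IsHermitian) (hq₂idem : q₂ * q₂ = q₂)
    (h1 : (D * q₁).trace = ((1 - ε₁ : ℝ) : ℂ))
    (h2 : (D * q₂).trace = ((1 - ε₂ : ℝ) : ℂ)) :
    (D * q₂ * q₁ * q₂).trace.im = 0 ∧
      1 - ε₁ - 2 * Real.sqrt ε₂ ≤ (D * q₂ * q₁ * q₂).trace.re := by
  let := D.toMatrixSeminormedAddCommGroup hD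
  have hq₁ : IsStarProjection q₁ := ⟨hq₁idem, hq₁herm⟩
  have hq₂ : IsStarProjection q₂ := ⟨hq₂idem, hq₂herm⟩
  have hS : (D * q₂ * q₁ * q₂).trace = (q₁ * q₂ * D * (q₁ * q₂)ᴴ).trace := by
    rw [conjTranspose_mul, hq₁.conjTranspose_eq, hq₂.conjTranspose_eq,
      show q₁ * q₂ * D * (q₂ * q₁) = q₁ * (q₂ * D * q₂) * q₁ by simp only [mul_assoc],
      hq₁.trace_mul_mul_self, trace_mul_comm]
    simp only [mul_assoc]
  have hS_nonneg : 0 ≤ (D * q₂ * q₁ * q₂).trace :=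
    hS ▸ (hD.mul_mul_conjTranspose_same (q₁ * q₂)).trace_nonneg
  have hS_re : ‖q₁ * q₂‖ ^ 2 = (D * q₂ * q₁ * q₂).trace.re := by
    rw [hD.norm_sq_eq_re_trace, hS]; rfl
  have hx : ‖q₁‖ ^ 2 = 1 - ε₁ := by simp [hD.norm_sq_of_isStarProjection hq₁, h1]
  have hy : ‖1 - q₂‖ ≤ √ε₂ := by
    refine Real.le_sqrt_of_sq_le ?_
    simp only [hD.norm_sq_of_isStarProjection hq₂.one_sub, mul_sub, mul_one, trace_sub, h2,
      RCLike.re_to_complex, Complex.sub_re, Complex.ofReal_re]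
    linarith
  have hz : ‖q₁‖ - ‖1 - q₂‖ ≤ ‖q₁ * q₂‖ := by
    have h := norm_add_le (q₁ * q₂) (q₁ * (1 - q₂))
    rw [← mul_add, add_sub_cancel, mul_one] at h
    linarith [hD.norm_mul_le_of_isStarProjection hq₁ (1 - q₂)]
  refine ⟨(Complex.nonneg_iff.1 hS_nonneg).2.symm, ?_⟩
  have := sq_sub_two_mul_le_sq (norm_nonneg _)
    ((hD.norm_sq_le_re_trace_of_isStarProjection hq₁).trans htrD) (norm_nonneg _)
    (norm_nonneg _) hz
  linarith

/-- Lemma "gentle-pinching" part 1: if `0 ≤ D ≤ 1` with `tr D ≤ 1` and `q₁, q₂` are orthogonal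
projections with `tr (D q₁) = 1 - ε₁`, `tr (D q₂) = 1 - ε₂`, then
`tr (D q₂ q₁ q₂) ≥ 1 - ε₁ - 2 √ε₂` (a nonnegative real number). -/
theorem trace_pinching_bound {d : ℕ} (D q₁ q₂ : Matrix (Fin d) (Fin d) ℂ) (ε₁ ε₂ : ℝ)
    (hD : D.PosSemidef) (hD1 : ((1 : Matrix (Fin d) (Fin d) ℂ) - D).PosSemidef)
    (htrD : D.trace.re ≤ 1)
    (hq₁herm : q₁.IsHermitian) (hq₁idem : q₁ * q₁ = q₁)
    (hq₂herm : q₂.IsHermitian) (hq₂idem : q₂ * q₂ = q₂)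
    (h1 : (D * q₁).trace = ((1 - ε₁ : ℝ) : ℂ))
    (h2 : (D * q₂).trace = ((1 - ε₂ : ℝ) : ℂ)) :
    (D * q₂ * q₁ * q₂).trace.im = 0 ∧
      1 - ε₁ - 2 * Real.sqrt ε₂ ≤ (D * q₂ * q₁ * q₂).trace.re :=
  trace_pinching_bound_general D q₁ q₂ ε₁ ε₂ hD htrD hq₁herm hq₁idem hq₂herm hq₂idem h1 h2
end

section
/- Let D be a d×d complex matrix with 0 ≤ D ≤ 1 in the Loewner order and tr(D) ≤ 1, and let q₁, q₂ be orthogonal projections in M_d(ℂ) with tr(D q₁) = 1 − ε₁ and tr(D q₂) = 1 − ε₂ (note ε₂ ≥ 0 automatically). Then 1 − ε₁ − √ε₂ ≤ |tr(D q₂ q₁)|. -/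
/-!
Inside `tr (D ·)` split `q₁ = q₂ q₁ + (1 - q₂) q₁`. The second term is a value of the
semi-inner product `⟪x, y⟫ = tr (y D xᴴ)` on matrices, so by Cauchy–Schwarz it is at most
`√tr (D (1 - q₂)) · √tr (D q₁) ≤ √ε₂ · 1`, since `tr (D q) ≤ tr D ≤ 1` for every orthogonal
projection `q` and `tr (D (1 - q₂)) = tr D - (1 - ε₂) ≤ ε₂`.
-/

open scoped ComplexOrder

namespace Matrix

variable {n 𝕜 : Type*} [Fintype n] [RCLike 𝕜] {M p q : Matrix n n 𝕜}

theorem PosSemidef.norm_trace_mul_mul_conjTranspose_le (hM : M.PosSemidef) (x y : Matrix n n 𝕜) :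
    ‖(y * M * xᴴ).trace‖ ≤
      √(RCLike.re (x * M * xᴴ).trace) * √(RCLike.re (y * M * yᴴ).trace) :=
  letI := M.toMatrixSeminormedAddCommGroup hM
  letI := M.toMatrixInnerProductSpace hM
  norm_inner_le_norm (𝕜 := 𝕜) x y

theorem trace_mul_mul_conjTranspose_of_isStarProjection (hq : IsStarProjection q)
    (M : Matrix n n 𝕜) : (q * M * qᴴ).trace = (M * q).trace := by
  rw [← star_eq_conjTranspose, hq.isSelfAdjoint.star_eq, trace_mul_cycle, hq.isIdempotentElem.eq,
    trace_mul_comm]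

theorem PosSemidef.re_trace_mul_nonneg_of_isStarProjection (hM : M.PosSemidef)
    (hq : IsStarProjection q) : 0 ≤ RCLike.re (M * q).trace := by
  rw [← trace_mul_mul_conjTranspose_of_isStarProjection hq]
  exact RCLike.nonneg_iff.mp (hM.mul_mul_conjTranspose_same q).trace_nonneg |>.1

theorem PosSemidef.re_trace_mul_le_of_isStarProjection [DecidableEq n] (hM : M.PosSemidef)
    (hq : IsStarProjection q) : RCLike.re (M * q).trace ≤ RCLike.re M.trace := by
  have := hM.re_trace_mul_nonneg_of_isStarProjection hq.one_sub
  rwa [mul_sub, mul_one, trace_sub, map_sub, sub_nonneg] at this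

theorem PosSemidef.norm_trace_mul_mul_le (hM : M.PosSemidef) (hp : IsStarProjection p)
    (hq : IsStarProjection q) :
    ‖(M * p * q).trace‖ ≤ √(RCLike.re (M * p).trace) * √(RCLike.re (M * q).trace) := by
  have h := hM.norm_trace_mul_mul_conjTranspose_le p q
  rwa [trace_mul_mul_conjTranspose_of_isStarProjection hp,
    trace_mul_mul_conjTranspose_of_isStarProjection hq, ← star_eq_conjTranspose,
    hp.isSelfAdjoint.star_eq, ← trace_mul_cycle] at h

theorem PosSemidef.norm_trace_mul_mul_le_sqrt [DecidableEq n] (hM : M.PosSemidef)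
    (htr : RCLike.re M.trace ≤ 1) (hp : IsStarProjection p) (hq : IsStarProjection q) :
    ‖(M * p * q).trace‖ ≤ √(RCLike.re (M * p).trace) := by
  have hq1 : √(RCLike.re (M * q).trace) ≤ 1 :=
    Real.sqrt_le_one.mpr ((hM.re_trace_mul_le_of_isStarProjection hq).trans htr)
  calc ‖(M * p * q).trace‖ ≤ √(RCLike.re (M * p).trace) * √(RCLike.re (M * q).trace) :=
        hM.norm_trace_mul_mul_le hp hq
    _ ≤ √(RCLike.re (M * p).trace) := mul_le_of_le_one_right (Real.sqrt_nonneg _) hq1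

end Matrix

open Matrix

theorem trace_q2q1_lower_bound_general {d : ℕ} (D q₁ q₂ : Matrix (Fin d) (Fin d) ℂ) (ε₁ ε₂ : ℝ)
    (hD : D.PosSemidef)
    (htrD : D.trace.re ≤ 1)
    (hq₁herm : q₁.IsHermitian) (hq₁idem : q₁ * q₁ = q₁)
    (hq₂herm : q₂.IsHermitian) (hq₂idem : q₂ * q₂ = q₂)
    (h1 : (D * q₁).trace = ((1 - ε₁ : ℝ) : ℂ))
    (h2 : (D * q₂).trace = ((1 - ε₂ : ℝ) : ℂ)) :
    1 - ε₁ - Real.sqrt ε₂ ≤ ‖(D * q₂ * q₁).trace‖ := by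
  have hq₁ : IsStarProjection q₁ := ⟨hq₁idem, hq₁herm⟩
  have hq₂ : IsStarProjection q₂ := ⟨hq₂idem, hq₂herm⟩
  have hsplit : (D * q₁).trace = (D * q₂ * q₁).trace + (D * (1 - q₂) * q₁).trace := by
    rw [← trace_add, ← add_mul, ← mul_add, add_sub_cancel, mul_one]
  have hcompl : (D * (1 - q₂)).trace.re ≤ ε₂ := by
    rw [mul_sub, mul_one, trace_sub, Complex.sub_re, h2, Complex.ofReal_re]
    linarith
  have hrest : ‖(D * (1 - q₂) * q₁).trace‖ ≤ √ε₂ :=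
    (hD.norm_trace_mul_mul_le_sqrt htrD hq₂.one_sub hq₁).trans (Real.sqrt_le_sqrt hcompl)
  calc 1 - ε₁ - √ε₂ = (D * q₁).trace.re - √ε₂ := by rw [h1, Complex.ofReal_re]
    _ ≤ ‖(D * q₁).trace‖ - √ε₂ := by gcongr; exact Complex.re_le_norm _
    _ ≤ ‖(D * q₂ * q₁).trace‖ := by
      rw [hsplit]; linarith [norm_add_le (D * q₂ * q₁).trace (D * (1 - q₂) * q₁).trace]

/-- If `0 ≤ D ≤ 1` with `tr D ≤ 1` and `q₁, q₂` are orthogonal projections with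
`tr (D q₁) = 1 - ε₁` and `tr (D q₂) = 1 - ε₂`, then `1 - ε₁ - √ε₂ ≤ |tr (D q₂ q₁)|`. -/
theorem trace_q2q1_lower_bound {d : ℕ} (D q₁ q₂ : Matrix (Fin d) (Fin d) ℂ) (ε₁ ε₂ : ℝ)
    (hD : D.PosSemidef) (hD1 : ((1 : Matrix (Fin d) (Fin d) ℂ) - D).PosSemidef)
    (htrD : D.trace.re ≤ 1)
    (hq₁herm : q₁.IsHermitian) (hq₁idem : q₁ * q₁ = q₁)
    (hq₂herm : q₂.IsHermitian) (hq₂idem : q₂ * q₂ = q₂)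
    (h1 : (D * q₁).trace = ((1 - ε₁ : ℝ) : ℂ))
    (h2 : (D * q₂).trace = ((1 - ε₂ : ℝ) : ℂ)) :
    1 - ε₁ - Real.sqrt ε₂ ≤ ‖(D * q₂ * q₁).trace‖ :=
  trace_q2q1_lower_bound_general D q₁ q₂ ε₁ ε₂ hD htrD hq₁herm hq₁idem hq₂herm hq₂idem h1 h2
end

section
/- Let D be a density matrix on ℂ^m ⊗ ℂ^n, i.e. a positive semidefinite matrix of trace 1 indexed by (Fin m × Fin n), and let D₁ ∈ M_m(ℂ) and D₂ ∈ M_n(ℂ) be its partial traces, characterized by tr(D₁ a) = tr(D (a ⊗ 1_n)) for all a ∈ M_m(ℂ) and tr(D₂ b) = tr(D (1_m ⊗ b)) for all b ∈ M_n(ℂ), where ⊗ denotes the Kronecker product. Let q₁ ∈ M_m(ℂ) and q₂ ∈ M_n(ℂ) be orthogonal projections with tr(D₁ q₁) = 1 − ε₁ and tr(D₂ q₂) = 1 − ε₂ (note ε₂ ≥ 0 automatically). Then tr(D (q₁ ⊗ q₂)) ≥ 1 − ε₁ − √ε₂. -/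
open scoped ComplexOrder
open Kronecker

/-!
For projections `q₁ ≤ 1` and `q₂ ≤ 1` the operator inequality
`q₁ ⊗ 1 + 1 ⊗ q₂ - 1 ≤ q₁ ⊗ q₂` holds, the difference being `(1 - q₁) ⊗ (1 - q₂) ≥ 0`.
Pairing it with the state `D` gives `tr (D (q₁ ⊗ q₂)) ≥ (1 - ε₁) + (1 - ε₂) - 1 = 1 - ε₁ - ε₂`,
and `ε₂ ≤ √ε₂` because `ε₂ ≤ 1`.
-/

namespace Matrix

open scoped MatrixOrder

variable {𝕜 ι κ : Type*} [RCLike 𝕜]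

section Trace

variable [Fintype ι] [DecidableEq ι]

theorem PosSemidef.trace_mul_nonneg {A B : Matrix ι ι 𝕜} (hA : A.PosSemidef)
    (hB : B.PosSemidef) : 0 ≤ (A * B).trace := by
  have hsqrt : (CFC.sqrt A)ᴴ = CFC.sqrt A :=
    (nonneg_iff_posSemidef.mp (CFC.sqrt_nonneg A)).1.eq
  have hconj : (A * B).trace = (CFC.sqrt A * B * CFC.sqrt A).trace := by
    rw [trace_mul_cycle, CFC.sqrt_mul_sqrt_self A hA.nonneg]
  rw [hconj]
  simpa [hsqrt] using (hB.conjTranspose_mul_mul_same (CFC.sqrt A)).trace_nonneg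

theorem PosSemidef.trace_mul_le_trace_mul {D A B : Matrix ι ι 𝕜} (hD : D.PosSemidef)
    (hAB : A ≤ B) : (D * A).trace ≤ (D * B).trace := by
  rw [← sub_nonneg, ← trace_sub, ← mul_sub]
  exact hD.trace_mul_nonneg hAB

end Trace

theorem kronecker_one_add_one_kronecker_sub_one_le [Fintype ι] [DecidableEq ι] [Fintype κ]
    [DecidableEq κ] {p : Matrix ι ι 𝕜} {q : Matrix κ κ 𝕜} (hp : p ≤ 1) (hq : q ≤ 1) :
    p ⊗ₖ 1 + 1 ⊗ₖ q - 1 ≤ p ⊗ₖ q := by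
  have hcompl : p ⊗ₖ q - (p ⊗ₖ 1 + 1 ⊗ₖ q - 1) = (1 - p) ⊗ₖ (1 - q) := by
    ext ⟨i, k⟩ ⟨j, l⟩
    simp only [sub_apply, add_apply, kroneckerMap_apply, one_apply, Prod.mk.injEq, ite_and]
    split_ifs <;> ring
  rw [le_iff, hcompl]
  exact (le_iff.mp hp).kronecker (le_iff.mp hq)

end Matrix

open Matrix
open scoped MatrixOrder

/-- Lemma "gentle-pinching" part 2: for a density matrix `D` on `ℂ^m ⊗ ℂ^n` with partial
traces `D₁`, `D₂`, and orthogonal projections `q₁`, `q₂` with `tr (D₁ q₁) = 1 - ε₁` and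
`tr (D₂ q₂) = 1 - ε₂`, one has `tr (D (q₁ ⊗ q₂)) ≥ 1 - ε₁ - √ε₂`. -/
theorem trace_partial_trace_bound {m n : ℕ}
    (D : Matrix (Fin m × Fin n) (Fin m × Fin n) ℂ)
    (hD : D.PosSemidef) (hDtr : D.trace = 1)
    (D₁ : Matrix (Fin m) (Fin m) ℂ) (D₂ : Matrix (Fin n) (Fin n) ℂ)
    (hD₁ : ∀ a : Matrix (Fin m) (Fin m) ℂ,
      (D₁ * a).trace = (D * (a ⊗ₖ (1 : Matrix (Fin n) (Fin n) ℂ))).trace)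
    (hD₂ : ∀ b : Matrix (Fin n) (Fin n) ℂ,
      (D₂ * b).trace = (D * ((1 : Matrix (Fin m) (Fin m) ℂ) ⊗ₖ b)).trace)
    (q₁ : Matrix (Fin m) (Fin m) ℂ) (q₂ : Matrix (Fin n) (Fin n) ℂ)
    (hq₁herm : q₁.IsHermitian) (hq₁idem : q₁ * q₁ = q₁)
    (hq₂herm : q₂.IsHermitian) (hq₂idem : q₂ * q₂ = q₂)
    (ε₁ ε₂ : ℝ)
    (h1 : (D₁ * q₁).trace = ((1 - ε₁ : ℝ) : ℂ))
    (h2 : (D₂ * q₂).trace = ((1 - ε₂ : ℝ) : ℂ)) :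
    1 - ε₁ - Real.sqrt ε₂ ≤ (D * (q₁ ⊗ₖ q₂)).trace.re := by
  have hq₁ : IsStarProjection q₁ := ⟨hq₁idem, hq₁herm⟩
  have hq₂ : IsStarProjection q₂ := ⟨hq₂idem, hq₂herm⟩
  have hunion := hD.trace_mul_le_trace_mul
    (kronecker_one_add_one_kronecker_sub_one_le hq₁.le_one hq₂.le_one)
  rw [mul_sub, mul_add, trace_sub, trace_add, ← hD₁, ← hD₂, h1, h2, mul_one, hDtr] at hunion
  have hε₂ : ε₂ ≤ 1 := by
    have h := hD.trace_mul_nonneg (PosSemidef.one.kronecker (nonneg_iff_posSemidef.mp hq₂.nonneg))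
    rw [← hD₂, h2] at h
    linarith [Complex.zero_le_real.mp h]
  have hunion_re := (Complex.le_def.mp hunion).1
  simp only [Complex.sub_re, Complex.add_re, Complex.ofReal_re, Complex.one_re] at hunion_re
  linarith [Real.le_sqrt_self_iff.mpr hε₂]
end

section
/- (Heisenberg's Principle, finite-dimensional version.) Let E : M_p(ℂ) ⊗ M_q(ℂ) → M_p(ℂ) be a linear map (on matrices indexed by (Fin p × Fin q), with tensor product realized as the Kronecker product) which is unital (E(1) = 1), positive (x ≥ 0 implies E(x) ≥ 0 in the Loewner order), and satisfies the Kadison–Schwarz inequality E(x)* E(x) ≤ E(x* x) for all x (this holds for every completely positive unital map). Assume E(a ⊗ 1_q) = a for all a ∈ M_p(ℂ). Then for every b ∈ M_q(ℂ), the matrix E(1_p ⊗ b) lies in the center of M_p(ℂ), i.e. E(1_p ⊗ b) · a = a · E(1_p ⊗ b) for all a ∈ M_p(ℂ). -/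
open scoped ComplexOrder
open Kronecker Matrix

/-!
The Kadison–Schwarz defect `D(x, y) = E(x* y) - E(x)* E(y)` is a matrix-valued sesquilinear form
which is positive on the diagonal, so `D(x, x) = 0` forces `D(x, y) = D(y, x) = 0` for all `y`:
the elements with `D(x, x) = 0` form Choi's multiplicative domain, over which `E` is a bimodule
map. Since `E` is the identity on `M_p ⊗ 1`, every `a ⊗ 1` lies in that domain, and as `a ⊗ 1`
commutes with `1 ⊗ b`,
`a E(1 ⊗ b) = E((a ⊗ 1)(1 ⊗ b)) = E((1 ⊗ b)(a ⊗ 1)) = E(1 ⊗ b) a`.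
-/

theorem eq_zero_of_forall_nonneg_mul_add_sq {s d : ℝ} (h : ∀ t : ℝ, 0 ≤ t * s + t ^ 2 * d) :
    s = 0 := by
  have hdisc := discrim_le_zero (a := d) (b := s) (c := 0) fun t => by linarith [h t]
  rw [discrim] at hdisc
  nlinarith [sq_nonneg s]

theorem Complex.eq_zero_of_forall_nonneg_mul_add_sq {s d : ℂ}
    (h : ∀ t : ℝ, 0 ≤ (t : ℂ) * s + (t : ℂ) ^ 2 * d) : s = 0 := by
  have hre : s.re = 0 := _root_.eq_zero_of_forall_nonneg_mul_add_sq (d := d.re) fun t => by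
    simpa [Complex.le_def, ← Complex.ofReal_pow] using (h t).1
  -- in `ComplexOrder`, `0 ≤ z` also says that `z` is real
  have him : ∀ t : ℝ, t * s.im + t ^ 2 * d.im = 0 := fun t => by
    simpa [Complex.le_def, ← Complex.ofReal_pow, eq_comm] using (Complex.le_def.mp (h t)).2
  have h1 := him 1
  have h2 := him (-1)
  exact Complex.ext hre (by rw [Complex.zero_im]; linarith)

theorem Complex.eq_zero_of_forall_nonneg_sesq {c c' d : ℂ}
    (h : ∀ γ : ℂ, 0 ≤ γ * c + starRingEnd ℂ γ * c' + (starRingEnd ℂ γ * γ) * d) :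
    c = 0 ∧ c' = 0 := by
  have hsum : c + c' = 0 := Complex.eq_zero_of_forall_nonneg_mul_add_sq (d := d) fun t => by
    convert h t using 1
    simp only [Complex.conj_ofReal]
    ring
  have hdiff : Complex.I * (c - c') = 0 :=
      Complex.eq_zero_of_forall_nonneg_mul_add_sq (d := d) fun t => by
    convert h (t * Complex.I) using 1
    simp only [map_mul, Complex.conj_ofReal, Complex.conj_I]
    linear_combination ((t : ℂ) ^ 2 * d) * Complex.I_sq
  have hdiff' : c - c' = 0 := (mul_eq_zero.mp hdiff).resolve_left Complex.I_ne_zero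
  constructor
  · linear_combination (hsum + hdiff') / 2
  · linear_combination (hsum - hdiff') / 2

theorem Matrix.eq_zero_of_forall_star_dotProduct_mulVec_eq_zero {n : Type*} [Fintype n]
    [DecidableEq n] {M : Matrix n n ℂ} (h : ∀ ξ : n → ℂ, star ξ ⬝ᵥ (M *ᵥ ξ) = 0) : M = 0 := by
  apply (Matrix.toLpLin 2 2).injective
  rw [map_zero, ← inner_map_self_eq_zero]
  intro x
  rw [EuclideanSpace.inner_eq_star_dotProduct, Matrix.ofLp_toLpLin, dotProduct_star,
    dotProduct_comm, toLin'_apply, h, star_zero]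

theorem Matrix.eq_zero_of_forall_posSemidef_sesq {n : Type*} [Fintype n] [DecidableEq n]
    {M N P : Matrix n n ℂ}
    (h : ∀ γ : ℂ, (γ • M + starRingEnd ℂ γ • N + (starRingEnd ℂ γ * γ) • P).PosSemidef) :
    M = 0 ∧ N = 0 := by
  have hform (ξ : n → ℂ) := Complex.eq_zero_of_forall_nonneg_sesq fun γ => by
    simpa only [add_mulVec, smul_mulVec, dotProduct_add, dotProduct_smul, smul_eq_mul]
      using (h γ).dotProduct_mulVec_nonneg ξ
  exact ⟨eq_zero_of_forall_star_dotProduct_mulVec_eq_zero fun ξ => (hform ξ).1,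
    eq_zero_of_forall_star_dotProduct_mulVec_eq_zero fun ξ => (hform ξ).2⟩

section SchwarzDefect

variable {A : Type*} [Ring A] [StarRing A] [Algebra ℂ A] [StarModule ℂ A]
  {n : Type*} [Fintype n] (E : A →ₗ[ℂ] Matrix n n ℂ)

def schwarzDefect (x y : A) : Matrix n n ℂ := E (star x * y) - (E x)ᴴ * E y

theorem schwarzDefect_add_smul (x y : A) (γ : ℂ) :
    schwarzDefect E (x + γ • y) (x + γ • y) = schwarzDefect E x x + γ • schwarzDefect E x y +
      starRingEnd ℂ γ • schwarzDefect E y x + (starRingEnd ℂ γ * γ) • schwarzDefect E y y := by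
  simp only [schwarzDefect, star_add, star_smul, add_mul, mul_add, smul_mul_assoc, mul_smul_comm,
    map_add, map_smul, conjTranspose_add, conjTranspose_smul, Complex.star_def]
  module

variable {E}

theorem schwarzDefect_eq_zero_of_self_eq_zero [DecidableEq n]
    (hKS : ∀ x, (schwarzDefect E x x).PosSemidef) {x : A} (hx : schwarzDefect E x x = 0) (y : A) :
    schwarzDefect E x y = 0 ∧ schwarzDefect E y x = 0 :=
  Matrix.eq_zero_of_forall_posSemidef_sesq fun γ => by
    simpa [schwarzDefect_add_smul, hx] using hKS (x + γ • y)

theorem map_star_mul_of_schwarzDefect_self_eq_zero [DecidableEq n]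
    (hKS : ∀ x, (schwarzDefect E x x).PosSemidef) {x : A} (hx : schwarzDefect E x x = 0) (y : A) :
    E (star x * y) = (E x)ᴴ * E y ∧ E (star y * x) = (E y)ᴴ * E x := by
  simpa only [schwarzDefect, sub_eq_zero] using schwarzDefect_eq_zero_of_self_eq_zero hKS hx y

end SchwarzDefect

theorem heisenberg_principle_general {p q : ℕ}
    (E : Matrix (Fin p × Fin q) (Fin p × Fin q) ℂ →ₗ[ℂ] Matrix (Fin p) (Fin p) ℂ)
    (hKS : ∀ x : Matrix (Fin p × Fin q) (Fin p × Fin q) ℂ,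
      (E (xᴴ * x) - (E x)ᴴ * (E x)).PosSemidef)
    (hid : ∀ a : Matrix (Fin p) (Fin p) ℂ, E (a ⊗ₖ (1 : Matrix (Fin q) (Fin q) ℂ)) = a) :
    ∀ (b : Matrix (Fin q) (Fin q) ℂ) (a : Matrix (Fin p) (Fin p) ℂ),
      E ((1 : Matrix (Fin p) (Fin p) ℂ) ⊗ₖ b) * a = a * E ((1 : Matrix (Fin p) (Fin p) ℂ) ⊗ₖ b) := by
  have hdom (a : Matrix (Fin p) (Fin p) ℂ) : schwarzDefect E (a ⊗ₖ 1) (a ⊗ₖ 1) = 0 := by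
    rw [schwarzDefect, star_eq_conjTranspose, conjTranspose_kronecker, conjTranspose_one,
      ← mul_kronecker_mul, Matrix.one_mul, hid, hid, sub_self]
  have hleft (a y) : E ((a ⊗ₖ 1) * y) = a * E y := by
    simpa [star_eq_conjTranspose, conjTranspose_kronecker, hid] using
      (map_star_mul_of_schwarzDefect_self_eq_zero hKS (hdom aᴴ) y).1
  have hright (a y) : E (yᴴ * (a ⊗ₖ 1)) = (E y)ᴴ * a := by
    simpa [star_eq_conjTranspose, hid] using
      (map_star_mul_of_schwarzDefect_self_eq_zero hKS (hdom a) y).2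
  have hstar (b : Matrix (Fin q) (Fin q) ℂ) : (E (1 ⊗ₖ bᴴ))ᴴ = E (1 ⊗ₖ b) := by
    have h := (hright 1 (1 ⊗ₖ bᴴ)).symm
    rwa [conjTranspose_kronecker, conjTranspose_one, conjTranspose_conjTranspose,
      one_kronecker_one, Matrix.mul_one, Matrix.mul_one] at h
  intro b a
  calc E (1 ⊗ₖ b) * a = E ((1 ⊗ₖ b) * (a ⊗ₖ 1)) := by
        rw [← hstar, ← hright, conjTranspose_kronecker, conjTranspose_one,
          conjTranspose_conjTranspose]
    _ = E ((a ⊗ₖ 1) * (1 ⊗ₖ b)) := by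
        simp only [← mul_kronecker_mul, Matrix.one_mul, Matrix.mul_one]
    _ = a * E (1 ⊗ₖ b) := hleft a _

/-- Heisenberg's Principle (finite-dimensional version): if `E : M_p(ℂ) ⊗ M_q(ℂ) → M_p(ℂ)`
is linear, unital, positive, satisfies the Kadison–Schwarz inequality, and restricts to the
identity on the first factor (`E (a ⊗ 1) = a`), then every `E (1 ⊗ b)` lies in the center
of `M_p(ℂ)`. -/
theorem heisenberg_principle {p q : ℕ}
    (E : Matrix (Fin p × Fin q) (Fin p × Fin q) ℂ →ₗ[ℂ] Matrix (Fin p) (Fin p) ℂ)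
    (hunital : E 1 = 1)
    (hpos : ∀ x : Matrix (Fin p × Fin q) (Fin p × Fin q) ℂ, x.PosSemidef → (E x).PosSemidef)
    (hKS : ∀ x : Matrix (Fin p × Fin q) (Fin p × Fin q) ℂ,
      (E (xᴴ * x) - (E x)ᴴ * (E x)).PosSemidef)
    (hid : ∀ a : Matrix (Fin p) (Fin p) ℂ, E (a ⊗ₖ (1 : Matrix (Fin q) (Fin q) ℂ)) = a) :
    ∀ (b : Matrix (Fin q) (Fin q) ℂ) (a : Matrix (Fin p) (Fin p) ℂ),
      E ((1 : Matrix (Fin p) (Fin p) ℂ) ⊗ₖ b) * a = a * E ((1 : Matrix (Fin p) (Fin p) ℂ) ⊗ₖ b) :=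
  heisenberg_principle_general E hKS hid
end

section
/- Let D be a density matrix in M_d(ℂ) and q an orthogonal projection in M_d(ℂ), with q⊥ := 1 − q. Then qDq + q⊥Dq⊥ is again a density matrix and its von Neumann entropy satisfies S(qDq + q⊥Dq⊥) ≤ S(D) + log 2. -/
open scoped ComplexOrder

open Classical in
/-- The von Neumann entropy `S(a) = -∑ᵢ λᵢ log λᵢ` of a (positive semidefinite) matrix,
computed from the eigenvalues of a Hermitian matrix (natural logarithm, `0 log 0 = 0`). -/
noncomputable def vnEntropy {n : Type*} [Fintype n] [DecidableEq n] (a : Matrix n n ℂ) : ℝ :=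
  if h : a.IsHermitian then -∑ i, (h.eigenvalues i) * Real.log (h.eigenvalues i) else 0

namespace PinchProof
open Matrix

variable {n : Type*} [Fintype n] [DecidableEq n]

/-- matrix function via the spectral decomposition -/
noncomputable def mfun {A : Matrix n n ℂ} (hA : A.IsHermitian) (g : ℝ → ℝ) : Matrix n n ℂ :=
  (hA.eigenvectorUnitary : Matrix n n ℂ) *
    diagonal (fun i => (g (hA.eigenvalues i) : ℂ)) *
    star (hA.eigenvectorUnitary : Matrix n n ℂ)

variable {A : Matrix n n ℂ} (hA : A.IsHermitian) (g g' : ℝ → ℝ)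

lemma mfun_mul_mfun : mfun hA g * mfun hA g' = mfun hA (fun x => g x * g' x) := by
  unfold mfun
  have h1 : star (hA.eigenvectorUnitary : Matrix n n ℂ) * (hA.eigenvectorUnitary : Matrix n n ℂ) = 1 :=
    Unitary.coe_star_mul_self _
  rw [show ∀ X Y Z W V : Matrix n n ℂ, X*Y*Z*(X*W*V) = X*(Y*((Z*X)*W))*V by intros; noncomm_ring]
  rw [h1, one_mul, diagonal_mul_diagonal]
  rw [show ∀ X Y Z : Matrix n n ℂ, X*Y*Z = X*(Y)*Z by intros; noncomm_ring]
  congr 2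
  ext i
  push_cast
  ring

lemma mfun_id : mfun hA (fun x => x) = A := by
  unfold mfun
  conv_rhs => rw [hA.spectral_theorem]
  rfl

lemma mfun_isHermitian : (mfun hA g).IsHermitian := by
  unfold mfun IsHermitian
  simp only [conjTranspose_mul, conjTranspose_conjTranspose, star_eq_conjTranspose,
    diagonal_conjTranspose, mul_assoc]
  have : (star fun i => (g (hA.eigenvalues i) : ℂ)) = fun i => (g (hA.eigenvalues i) : ℂ) := by
    funext i
    simp [Complex.conj_ofReal]
  rw [this]

lemma mfun_add : mfun hA g + mfun hA g' = mfun hA (fun x => g x + g' x) := by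
  unfold mfun
  rw [← Matrix.add_mul, ← Matrix.mul_add, Matrix.diagonal_add]
  congr 2
  funext i
  push_cast
  ring

lemma mfun_sub : mfun hA g - mfun hA g' = mfun hA (fun x => g x - g' x) := by
  unfold mfun
  rw [← Matrix.sub_mul, ← Matrix.mul_sub, Matrix.diagonal_sub]
  congr 2
  funext i
  push_cast
  ring

lemma mfun_congr (h : ∀ x, g x = g' x) : mfun hA g = mfun hA g' :=
  congrArg (mfun hA) (funext h)

lemma mfun_one : mfun hA (fun _ => 1) = 1 := by
  unfold mfun
  have : (diagonal (fun _ : n => ((1 : ℝ) : ℂ))) = 1 := by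
    simp [Matrix.diagonal_one]
  rw [this, Matrix.mul_one]
  exact Unitary.coe_mul_star_self _

lemma posSemidef_mfun (hg : ∀ i, 0 ≤ g (hA.eigenvalues i)) : (mfun hA g).PosSemidef := by
  unfold mfun
  have : (Matrix.diagonal (fun i => (g (hA.eigenvalues i) : ℂ))).PosSemidef := by
    rw [posSemidef_diagonal_iff]
    intro i
    rw [Complex.zero_le_real]
    exact hg i
  simpa [Matrix.star_eq_conjTranspose] using this.mul_mul_conjTranspose_same (hA.eigenvectorUnitary : Matrix n n ℂ)

lemma trace_mul_diag (X : Matrix n n ℂ) (v : n → ℂ) :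
    (X * diagonal v).trace = ∑ j, X j j * v j := by
  simp [Matrix.trace, Matrix.diag, Matrix.mul_diagonal]

lemma trace_mul_mfun (B : Matrix n n ℂ) :
    (B * mfun hA g).trace =
      ∑ j, (star (hA.eigenvectorUnitary : Matrix n n ℂ) * B *
        (hA.eigenvectorUnitary : Matrix n n ℂ)) j j * (g (hA.eigenvalues j) : ℂ) := by
  unfold mfun
  rw [show B * ((hA.eigenvectorUnitary : Matrix n n ℂ) *
      diagonal (fun i => (g (hA.eigenvalues i) : ℂ)) * star (hA.eigenvectorUnitary : Matrix n n ℂ))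
    = (B * (hA.eigenvectorUnitary : Matrix n n ℂ) * diagonal (fun i => (g (hA.eigenvalues i) : ℂ)))
      * star (hA.eigenvectorUnitary : Matrix n n ℂ) by noncomm_ring]
  rw [Matrix.trace_mul_comm]
  rw [show star (hA.eigenvectorUnitary : Matrix n n ℂ) * (B * (hA.eigenvectorUnitary : Matrix n n ℂ)
      * diagonal (fun i => (g (hA.eigenvalues i) : ℂ)))
    = (star (hA.eigenvectorUnitary : Matrix n n ℂ) * B * (hA.eigenvectorUnitary : Matrix n n ℂ))
      * diagonal (fun i => (g (hA.eigenvalues i) : ℂ)) by noncomm_ring]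
  exact trace_mul_diag _ _

lemma commute_mfun (q : Matrix n n ℂ) (hq : q * A = A * q) :
    q * mfun hA g = mfun hA g * q := by
  set U : Matrix n n ℂ := (hA.eigenvectorUnitary : Matrix n n ℂ) with hU
  have hUV : U * star U = 1 := Unitary.coe_mul_star_self _
  have hVU : star U * U = 1 := Unitary.coe_star_mul_self _
  set B : Matrix n n ℂ := star U * q * U with hB
  have h2' : U * diagonal (fun i => ((hA.eigenvalues i : ℝ) : ℂ)) * star U = A :=
    hA.spectral_theorem.symm
  have e1 : B * diagonal (fun i => ((hA.eigenvalues i : ℝ) : ℂ))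
      = star U * q * (U * diagonal (fun i => ((hA.eigenvalues i : ℝ) : ℂ)) * star U) * U := by
    rw [show star U * q * (U * diagonal (fun i => ((hA.eigenvalues i : ℝ) : ℂ)) * star U) * U
      = star U * q * U * diagonal (fun i => ((hA.eigenvalues i : ℝ) : ℂ)) * (star U * U) by
        noncomm_ring, hVU, mul_one, hB]
  have e2 : diagonal (fun i => ((hA.eigenvalues i : ℝ) : ℂ)) * B
      = star U * (U * diagonal (fun i => ((hA.eigenvalues i : ℝ) : ℂ)) * star U) * q * U := by
    rw [show star U * (U * diagonal (fun i => ((hA.eigenvalues i : ℝ) : ℂ)) * star U) * q * U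
      = (star U * U) * diagonal (fun i => ((hA.eigenvalues i : ℝ) : ℂ)) * (star U * q * U) by
        noncomm_ring, hVU, one_mul, hB]
  rw [h2'] at e1 e2
  have hcomm : B * diagonal (fun i => ((hA.eigenvalues i : ℝ) : ℂ))
      = diagonal (fun i => ((hA.eigenvalues i : ℝ) : ℂ)) * B := by
    rw [e1, e2, show star U * q * A * U = star U * (q * A) * U by noncomm_ring, hq]
    noncomm_ring
  have hentry : ∀ i j, B i j * (g (hA.eigenvalues j) : ℂ) = (g (hA.eigenvalues i) : ℂ) * B i j := by
    intro i j
    have := congrFun (congrFun hcomm i) j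
    rw [Matrix.mul_diagonal, Matrix.diagonal_mul] at this
    rcases eq_or_ne (hA.eigenvalues i) (hA.eigenvalues j) with h | h
    · rw [h, mul_comm]
    · have hBij : B i j = 0 := by
        have hne : ((hA.eigenvalues j : ℝ) : ℂ) ≠ ((hA.eigenvalues i : ℝ) : ℂ) := by
          simpa [Complex.ofReal_inj] using (Ne.symm h)
        by_contra hB0
        exact hne (mul_left_cancel₀ hB0 (by linear_combination this))
      simp [hBij]
  have hcommg : B * diagonal (fun i => (g (hA.eigenvalues i) : ℂ))
      = diagonal (fun i => (g (hA.eigenvalues i) : ℂ)) * B := by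
    ext i j
    rw [Matrix.mul_diagonal, Matrix.diagonal_mul]
    exact hentry i j
  have hq' : q = U * B * star U := by
    rw [hB, show U * (star U * q * U) * star U = (U * star U) * q * (U * star U) by noncomm_ring,
      hUV, one_mul, mul_one]
  rw [hq']
  unfold mfun
  rw [← hU]
  calc U * B * star U * (U * diagonal (fun i => (g (hA.eigenvalues i) : ℂ)) * star U)
      = U * (B * (star U * U) * diagonal (fun i => (g (hA.eigenvalues i) : ℂ))) * star U := by noncomm_ring
    _ = U * (B * diagonal (fun i => (g (hA.eigenvalues i) : ℂ))) * star U := by rw [hVU]; noncomm_ring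
    _ = U * (diagonal (fun i => (g (hA.eigenvalues i) : ℂ)) * B) * star U := by rw [hcommg]
    _ = U * diagonal (fun i => (g (hA.eigenvalues i) : ℂ)) * star U * (U * B * star U) := by
        rw [show U * diagonal (fun i => (g (hA.eigenvalues i) : ℂ)) * star U * (U * B * star U)
          = U * (diagonal (fun i => (g (hA.eigenvalues i) : ℂ)) * (star U * U) * B) * star U by noncomm_ring, hVU]
        noncomm_ring

lemma psd_diag_entry {C : Matrix n n ℂ} (hC : C.PosSemidef) (j : n) :
    C j j = ((C j j).re : ℂ) ∧ 0 ≤ (C j j).re := by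
  have h := hC.dotProduct_mulVec_nonneg (Pi.single j 1)
  have hval : dotProduct (star (Pi.single j 1)) (C *ᵥ Pi.single j 1) = C j j := by
    simp [Matrix.mulVec_single, dotProduct, Pi.single_apply, apply_ite]
  rw [hval] at h
  rw [Complex.nonneg_iff] at h
  refine ⟨?_, h.1⟩
  exact Complex.ext (by simp) (by simpa using h.2.symm)

lemma trace_psd {C : Matrix n n ℂ} (hC : C.PosSemidef) :
    C.trace = ((C.trace).re : ℂ) ∧ 0 ≤ (C.trace).re := by
  have h1 : C.trace = ((∑ j, (C j j).re : ℝ) : ℂ) := by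
    rw [Matrix.trace]
    push_cast
    exact Finset.sum_congr rfl fun j _ => (psd_diag_entry hC j).1
  constructor
  · rw [h1]; simp
  · rw [h1]; simp only [Complex.ofReal_re]
    exact Finset.sum_nonneg fun j _ => (psd_diag_entry hC j).2

lemma trace_mul_psd {A B : Matrix n n ℂ} (hA : A.PosSemidef) (hB : B.PosSemidef) :
    (A * B).trace = (((A * B).trace).re : ℂ) ∧ 0 ≤ ((A * B).trace).re := by
  obtain ⟨X, rfl⟩ := (by open scoped MatrixOrder in exact CStarAlgebra.nonneg_iff_eq_star_mul_self.mp hB.nonneg :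
    ∃ X : Matrix n n ℂ, B = Xᴴ * X)
  have h1 : (A * (Xᴴ * X)).trace = (X * A * Xᴴ).trace := by
    rw [show A * (Xᴴ * X) = (A * Xᴴ) * X by noncomm_ring, Matrix.trace_mul_comm,
      ← Matrix.mul_assoc]
  rw [h1]
  exact trace_psd (hA.mul_mul_conjTranspose_same X)

lemma psd_trace_zero {C : Matrix n n ℂ} (hC : C.PosSemidef) (h : C.trace = 0) : C = 0 := by
  obtain ⟨X, rfl⟩ := (by open scoped MatrixOrder in exact CStarAlgebra.nonneg_iff_eq_star_mul_self.mp hC.nonneg :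
    ∃ X : Matrix n n ℂ, C = Xᴴ * X)
  rw [conjTranspose_mul_self_eq_zero]
  have h2 : ∑ j, ∑ i, Complex.normSq (X i j) = 0 := by
    have : (Xᴴ * X).trace = ((∑ j, ∑ i, Complex.normSq (X i j) : ℝ) : ℂ) := by
      rw [Matrix.trace]
      push_cast
      refine Finset.sum_congr rfl fun j _ => ?_
      rw [Matrix.diag_apply, Matrix.mul_apply]
      exact Finset.sum_congr rfl fun i _ => by
        rw [Matrix.conjTranspose_apply, RCLike.star_def, ← Complex.normSq_eq_conj_mul_self]
    rw [h, ← Complex.ofReal_zero] at this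
    exact_mod_cast this.symm
  ext i j
  have := (Finset.sum_eq_zero_iff_of_nonneg (fun j _ => Finset.sum_nonneg
    (fun i _ => Complex.normSq_nonneg (X i j)))).mp h2 j (Finset.mem_univ j)
  have := (Finset.sum_eq_zero_iff_of_nonneg (fun i _ => Complex.normSq_nonneg (X i j))).mp
    this i (Finset.mem_univ i)
  simpa using Complex.normSq_eq_zero.mp this

lemma eigenvalues_le_two {M : Matrix n n ℂ} (hM : M.IsHermitian)
    (h : ((1 : Matrix n n ℂ) + 1 - M).PosSemidef) (i : n) : hM.eigenvalues i ≤ 2 := by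
  have hv := hM.eigenvalues_eq i
  have hnorm : dotProduct (star ⇑(hM.eigenvectorBasis i)) ⇑(hM.eigenvectorBasis i) = 1 := by
    have horm := hM.eigenvectorBasis.orthonormal.1 i
    have h2 : (inner ℂ (hM.eigenvectorBasis i) (hM.eigenvectorBasis i) : ℂ) = 1 := by
      rw [inner_self_eq_norm_sq_to_K, horm]
      norm_num
    rw [EuclideanSpace.inner_eq_star_dotProduct] at h2
    rw [dotProduct_comm]
    simpa using h2
  have hp := h.re_dotProduct_nonneg ⇑(hM.eigenvectorBasis i)
  rw [Matrix.sub_mulVec, Matrix.add_mulVec, Matrix.one_mulVec, dotProduct_sub,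
    dotProduct_add, hnorm] at hp
  simp only [map_sub, map_add, Complex.add_re, Complex.one_re] at hp
  have : RCLike.re (dotProduct (star ⇑(hM.eigenvectorBasis i)) (M *ᵥ ⇑(hM.eigenvectorBasis i)))
      = hM.eigenvalues i := hv.symm
  rw [this] at hp
  simp only [RCLike.one_re] at hp
  linarith

lemma conj_diag_entry (W : Matrix n n ℂ) (ρ : n → ℝ) (j : n) :
    (W * diagonal (fun k => (ρ k : ℂ)) * star W) j j
      = ((∑ k, Complex.normSq (W j k) * ρ k : ℝ) : ℂ) := by
  rw [Matrix.mul_apply]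
  push_cast
  refine Finset.sum_congr rfl fun k _ => ?_
  rw [Matrix.mul_diagonal, Matrix.star_apply, RCLike.star_def,
    show W j k * (ρ k : ℂ) * (starRingEnd ℂ) (W j k)
      = (W j k * (starRingEnd ℂ) (W j k)) * (ρ k : ℂ) by ring, Complex.mul_conj]

lemma row_normSq_sum (W : Matrix n n ℂ) (h : W * star W = 1) (j : n) :
    ∑ k, Complex.normSq (W j k) = 1 := by
  have := Matrix.ext_iff.2 h j j
  rw [Matrix.mul_apply] at this
  rw [Matrix.one_apply_eq] at this
  have h2 : ((∑ k, Complex.normSq (W j k) : ℝ) : ℂ) = 1 := by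
    push_cast
    rw [← this]
    refine Finset.sum_congr rfl fun k _ => ?_
    rw [Matrix.star_apply, RCLike.star_def, Complex.mul_conj]
  exact_mod_cast h2

lemma col_normSq_sum (W : Matrix n n ℂ) (h : star W * W = 1) (k : n) :
    ∑ j, Complex.normSq (W j k) = 1 := by
  have := Matrix.ext_iff.2 h k k
  rw [Matrix.mul_apply] at this
  rw [Matrix.one_apply_eq] at this
  have h2 : ((∑ j, Complex.normSq (W j k) : ℝ) : ℂ) = 1 := by
    push_cast
    rw [← this]
    refine Finset.sum_congr rfl fun j _ => ?_
    rw [Matrix.star_apply, RCLike.star_def, mul_comm, Complex.mul_conj]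
  exact_mod_cast h2

end PinchProof

/-- Pinching a density matrix `D` by a projection `q` gives a density matrix
`q D q + q⊥ D q⊥` whose entropy exceeds that of `D` by at most `log 2`. -/
theorem entropy_pinching_le {d : ℕ} (D q : Matrix (Fin d) (Fin d) ℂ)
    (hD : D.PosSemidef) (hDtr : D.trace = 1)
    (hqherm : q.IsHermitian) (hqidem : q * q = q) :
    (q * D * q + ((1 : Matrix (Fin d) (Fin d) ℂ) - q) * D * ((1 : Matrix (Fin d) (Fin d) ℂ) - q)).PosSemidef ∧
    (q * D * q + ((1 : Matrix (Fin d) (Fin d) ℂ) - q) * D * ((1 : Matrix (Fin d) (Fin d) ℂ) - q)).trace = 1 ∧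
    vnEntropy (q * D * q + ((1 : Matrix (Fin d) (Fin d) ℂ) - q) * D * ((1 : Matrix (Fin d) (Fin d) ℂ) - q)) ≤
      vnEntropy D + Real.log 2 := by
  classical
  open Matrix PinchProof in
  set q' : Matrix (Fin d) (Fin d) ℂ := (1 : Matrix (Fin d) (Fin d) ℂ) - q with hq'def
  set E : Matrix (Fin d) (Fin d) ℂ := q * D * q + q' * D * q' with hEdef
  have hq'herm : q'.IsHermitian := (Matrix.isHermitian_one).sub hqherm
  have hqq' : q * q' = 0 := by
    rw [hq'def, Matrix.mul_sub, Matrix.mul_one, hqidem, sub_self]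
  have hq'q : q' * q = 0 := by
    rw [hq'def, Matrix.sub_mul, Matrix.one_mul, hqidem, sub_self]
  have hq'idem : q' * q' = q' := by
    rw [hq'def, Matrix.mul_sub, Matrix.mul_one, Matrix.sub_mul, Matrix.one_mul, hqidem]
    abel
  have h1psd : (q * D * q).PosSemidef := by
    have := hD.conjTranspose_mul_mul_same q
    rwa [hqherm.eq] at this
  have h2psd : (q' * D * q').PosSemidef := by
    have := hD.conjTranspose_mul_mul_same q'
    rwa [hq'herm.eq] at this
  have hEpsd : E.PosSemidef := h1psd.add h2psd
  have hE : E.IsHermitian := hEpsd.1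
  have htrE : E.trace = 1 := by
    have t1 : (q * D * q).trace = (q * q * D).trace := Matrix.trace_mul_cycle q D q
    have t2 : (q' * D * q').trace = (q' * q' * D).trace := Matrix.trace_mul_cycle q' D q'
    rw [hEdef, Matrix.trace_add, t1, t2, hqidem, hq'idem, ← Matrix.trace_add, ← Matrix.add_mul]
    rw [show q + q' = 1 by rw [hq'def]; abel, Matrix.one_mul, hDtr]
  refine ⟨hEpsd, htrE, ?_⟩
  -- notation
  set U : Matrix (Fin d) (Fin d) ℂ := (hE.eigenvectorUnitary : Matrix (Fin d) (Fin d) ℂ) with hUdef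
  set F : Matrix (Fin d) (Fin d) ℂ := (hD.1.eigenvectorUnitary : Matrix (Fin d) (Fin d) ℂ) with hFdef
  set μ : Fin d → ℝ := hE.eigenvalues with hμdef
  set ν : Fin d → ℝ := hD.1.eigenvalues with hνdef
  have hUV : U * star U = 1 := Unitary.coe_mul_star_self _
  have hVU : star U * U = 1 := Unitary.coe_star_mul_self _
  have hFV : F * star F = 1 := Unitary.coe_mul_star_self _
  have hVF : star F * F = 1 := Unitary.coe_star_mul_self _
  set W : Matrix (Fin d) (Fin d) ℂ := star U * F with hWdef
  have hstarW : star W = star F * U := by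
    rw [hWdef, Matrix.star_mul, star_star]
  have hWW : W * star W = 1 := by
    rw [hstarW, hWdef, show star U * F * (star F * U) = star U * (F * star F) * U by
      noncomm_ring, hFV, Matrix.mul_one, hVU]
  have hW'W : star W * W = 1 := by
    rw [hstarW, hWdef, show star F * U * (star U * F) = star F * (U * star U) * F by
      noncomm_ring, hUV, Matrix.mul_one, hVF]
  set tt : Fin d → Fin d → ℝ := fun j k => Complex.normSq (W j k) with httdef
  set c : Fin d → ℝ := fun j => ∑ k, tt j k * ν k with hcdef
  set w : Fin d → ℝ := fun j => ∑ k, tt j k * (ν k)^2 with hwdef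
  have htt0 : ∀ j k, 0 ≤ tt j k := fun j k => Complex.normSq_nonneg _
  have hμ0 : ∀ j, 0 ≤ μ j := hEpsd.eigenvalues_nonneg
  have hν0 : ∀ k, 0 ≤ ν k := hD.eigenvalues_nonneg
  have hc0 : ∀ j, 0 ≤ c j := fun j =>
    Finset.sum_nonneg fun k _ => mul_nonneg (htt0 j k) (hν0 k)
  have hw0 : ∀ j, 0 ≤ w j := fun j =>
    Finset.sum_nonneg fun k _ => mul_nonneg (htt0 j k) (sq_nonneg _)
  have hrow : ∀ j, ∑ k, tt j k = 1 := row_normSq_sum W hWW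
  have hcol : ∀ k, ∑ j, tt j k = 1 := col_normSq_sum W hW'W
  -- spectral theorem for D, in the coercion form
  have hsd : D = F * diagonal (fun k => ((ν k : ℝ) : ℂ)) * star F := hD.1.spectral_theorem
  -- representation of diagonal entries
  have hDW : star U * D * U = W * diagonal (fun k => ((ν k : ℝ) : ℂ)) * star W := by
    rw [hstarW, hWdef]
    conv_lhs => rw [hsd]
    noncomm_ring
  have hcrep : ∀ j, (star U * D * U) j j = ((c j : ℝ) : ℂ) := by
    intro j
    rw [hDW, conj_diag_entry]
  have hDDW : star U * (D * D) * U = W * diagonal (fun k => (((ν k)^2 : ℝ) : ℂ)) * star W := by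
    rw [hstarW, hWdef]
    have : D * D = F * diagonal (fun k => (((ν k)^2 : ℝ) : ℂ)) * star F := by
      conv_lhs => rw [hsd]
      rw [show F * diagonal (fun k => ((ν k : ℝ) : ℂ)) * star F *
          (F * diagonal (fun k => ((ν k : ℝ) : ℂ)) * star F)
        = F * (diagonal (fun k => ((ν k : ℝ) : ℂ)) * (star F * F) *
            diagonal (fun k => ((ν k : ℝ) : ℂ))) * star F by noncomm_ring, hVF, Matrix.mul_one,
        diagonal_mul_diagonal]
      congr 2
      funext k
      push_cast
      ring
    rw [this]
    noncomm_ring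
  have hwrep : ∀ j, (star U * (D * D) * U) j j = ((w j : ℝ) : ℂ) := by
    intro j
    rw [hDDW, conj_diag_entry]
  -- the pinching trace identity
  have hqE : q * E = E * q := by
    rw [hEdef]
    rw [Matrix.mul_add, Matrix.add_mul]
    rw [show q * (q * D * q) = (q * q) * D * q by noncomm_ring, hqidem]
    rw [show q * (q' * D * q') = (q * q') * D * q' by noncomm_ring, hqq']
    rw [show q * D * q * q = q * D * (q * q) by noncomm_ring, hqidem]
    rw [show q' * D * q' * q = q' * D * (q' * q) by noncomm_ring, hq'q]
    simp
  have hsplit : D = q * D * q + q * D * q' + q' * D * q + q' * D * q' := by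
    rw [hq'def]
    noncomm_ring
  have hDsum : ∀ G : Matrix (Fin d) (Fin d) ℂ, D * G = E * G + (q * D * q') * G
      + (q' * D * q) * G := by
    intro G
    rw [hEdef]
    conv_lhs => rw [hsplit]
    noncomm_ring
  have htrid : ∀ g : ℝ → ℝ, (D * mfun hE g).trace = (E * mfun hE g).trace := by
    intro g
    have hGq : q * mfun hE g = mfun hE g * q := commute_mfun hE g q hqE
    have hGq' : q' * mfun hE g = mfun hE g * q' := by
      rw [hq'def, Matrix.sub_mul, Matrix.mul_sub, Matrix.one_mul, Matrix.mul_one, hGq]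
    have z1 : ((q * D * q') * mfun hE g).trace = 0 := by
      rw [show (q * D * q') * mfun hE g = q * D * (q' * mfun hE g) by noncomm_ring, hGq',
        show q * D * (mfun hE g * q') = (q * D * mfun hE g) * q' by noncomm_ring,
        Matrix.trace_mul_comm,
        show q' * (q * D * mfun hE g) = (q' * q) * (D * mfun hE g) by noncomm_ring, hq'q,
        Matrix.zero_mul, Matrix.trace_zero]
    have z2 : ((q' * D * q) * mfun hE g).trace = 0 := by
      rw [show (q' * D * q) * mfun hE g = q' * D * (q * mfun hE g) by noncomm_ring, hGq,
        show q' * D * (mfun hE g * q) = (q' * D * mfun hE g) * q by noncomm_ring,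
        Matrix.trace_mul_comm,
        show q * (q' * D * mfun hE g) = (q * q') * (D * mfun hE g) by noncomm_ring, hqq',
        Matrix.zero_mul, Matrix.trace_zero]
    rw [hDsum (mfun hE g), Matrix.trace_add, Matrix.trace_add, z1, z2, add_zero, add_zero]
  -- diagonalized traces
  have hdiagE : star U * E * U = diagonal (fun j => ((μ j : ℝ) : ℂ)) :=
    by have := hE.conjStarAlgAut_star_eigenvectorUnitary; rw [Unitary.conjStarAlgAut_star_apply] at this; exact this
  have hA1 : ∀ g : ℝ → ℝ, (E * mfun hE g).trace = ((∑ j, μ j * g (μ j) : ℝ) : ℂ) := by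
    intro g
    rw [trace_mul_mfun hE g E]
    push_cast
    refine Finset.sum_congr rfl fun j _ => ?_
    rw [hdiagE, Matrix.diagonal_apply_eq]
  have hA2 : ∀ g : ℝ → ℝ, (D * mfun hE g).trace = ((∑ j, c j * g (μ j) : ℝ) : ℂ) := by
    intro g
    rw [trace_mul_mfun hE g D]
    push_cast
    refine Finset.sum_congr rfl fun j _ => ?_
    rw [hcrep j]
  have hstar : ∀ g : ℝ → ℝ, ∑ j, c j * g (μ j) = ∑ j, μ j * g (μ j) := by
    intro g
    have := (htrid g).symm.trans (hA2 g) |>.symm.trans (hA1 g)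
    exact_mod_cast this
  -- c vanishes where μ vanishes
  have hczero : ∀ j, μ j = 0 → c j = 0 := by
    intro j hj
    have h := hstar (fun x => if x = 0 then 1 else 0)
    have hRHS : ∑ j', μ j' * (if μ j' = 0 then (1:ℝ) else 0) = 0 := by
      refine Finset.sum_eq_zero fun j' _ => ?_
      by_cases h0 : μ j' = 0
      · rw [h0]; ring
      · rw [if_neg h0]; ring
    rw [hRHS] at h
    have hterm := (Finset.sum_eq_zero_iff_of_nonneg (fun j' _ => by
      by_cases h0 : μ j' = 0
      · rw [if_pos h0, mul_one]; exact hc0 j'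
      · rw [if_neg h0, mul_zero])).mp h j (Finset.mem_univ j)
    rwa [if_pos hj, mul_one] at hterm
  -- total masses
  have hsumc : ∑ j, c j = 1 := by
    have h := hstar (fun _ => 1)
    have htr : ∑ j, μ j * 1 = 1 := by
      have := hA1 (fun _ => 1)
      rw [show mfun hE (fun _ => 1) = 1 from mfun_one hE, Matrix.mul_one, htrE] at this
      exact_mod_cast this.symm
    simpa using h.trans (by simpa using htr)
  have hsumν : ∑ k, ν k = 1 := by
    have : D.trace = ((∑ k, ν k : ℝ) : ℂ) := by
      conv_lhs => rw [hsd]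
      rw [Matrix.trace_mul_cycle, hVF, Matrix.one_mul, Matrix.trace_diagonal]
      push_cast
      rfl
    rw [hDtr] at this
    exact_mod_cast this.symm
  -- functional calculus elements
  set g0 : ℝ → ℝ := fun x => if 0 < x then (Real.sqrt x)⁻¹ else 0 with hg0def
  set gP : ℝ → ℝ := fun x => if 0 < x then 1 else 0 with hgPdef
  set R : Matrix (Fin d) (Fin d) ℂ := mfun hE g0 with hRdef
  set P : Matrix (Fin d) (Fin d) ℂ := mfun hE gP with hPdef
  set Q : Matrix (Fin d) (Fin d) ℂ := (1 : Matrix (Fin d) (Fin d) ℂ) - P with hQdef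
  have hRherm : R.IsHermitian := mfun_isHermitian hE g0
  have hPherm : P.IsHermitian := mfun_isHermitian hE gP
  set M : Matrix (Fin d) (Fin d) ℂ := R * D * R with hMdef
  have hMpsd : M.PosSemidef := by
    have := hD.conjTranspose_mul_mul_same R
    rwa [hRherm.eq] at this
  have hM : M.IsHermitian := hMpsd.1
  have hg0sq : ∀ x : ℝ, g0 x * x * g0 x = gP x := by
    intro x
    by_cases hx : 0 < x
    · rw [hg0def, hgPdef]
      simp only [if_pos hx]
      have hs : Real.sqrt x ≠ 0 := by positivity
      rw [← Real.mul_self_sqrt hx.le]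
      field_simp
      rw [Real.sqrt_sq (Real.sqrt_nonneg x)]
    · rw [hg0def, hgPdef]
      simp only [if_neg hx]
      ring
  -- R * E * R = P
  have hRER : R * E * R = P := by
    have h1 : R * E * R = R * mfun hE (fun x => x) * R := by rw [mfun_id hE]
    rw [h1, hRdef, mfun_mul_mfun, mfun_mul_mfun, hPdef]
    exact mfun_congr hE _ _ hg0sq
  -- P absorbs D
  have hQ1 : Q = mfun hE (fun x => 1 - gP x) := by
    rw [hQdef, hPdef, ← mfun_one hE, mfun_sub]
  have hQherm : Q.IsHermitian := by
    rw [hQ1]; exact mfun_isHermitian hE _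
  have hQpsd : Q.PosSemidef := by
    rw [hQ1]
    refine posSemidef_mfun hE _ fun i => ?_
    rw [hgPdef]
    dsimp only
    split_ifs <;> norm_num
  have hQQ : Q * Q = Q := by
    rw [hQ1, mfun_mul_mfun]
    refine mfun_congr hE _ _ fun x => ?_
    rw [hgPdef]
    by_cases hx : 0 < x <;> simp [hx]
  have hQDQ : (Q * D * Q).PosSemidef := by
    have := hD.conjTranspose_mul_mul_same Q
    rwa [hQherm.eq] at this
  have htrQDQ : (Q * D * Q).trace = 0 := by
    rw [Matrix.trace_mul_cycle, hQQ, Matrix.trace_mul_comm, hQ1]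
    rw [hA2 (fun x => 1 - gP x)]
    have : ∑ j, c j * (1 - gP (μ j)) = 0 := by
      refine Finset.sum_eq_zero fun j _ => ?_
      rw [hgPdef]
      by_cases h0 : 0 < μ j
      · simp [h0]
      · have hμj : μ j = 0 := le_antisymm (not_lt.mp h0) (hμ0 j)
        rw [hczero j hμj]
        ring
    rw [this]
    simp
  have hQDQ0 : Q * D * Q = 0 := psd_trace_zero hQDQ htrQDQ
  have hDQ0 : D * Q = 0 := by
    obtain ⟨X, hX⟩ := (by open scoped MatrixOrder in exact CStarAlgebra.nonneg_iff_eq_star_mul_self.mp hD.nonneg :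
      ∃ X : Matrix (Fin d) (Fin d) ℂ, D = Xᴴ * X)
    have h1 : (Q * Xᴴ) * (X * Q) = 0 := by
      rw [show (Q * Xᴴ) * (X * Q) = Q * (Xᴴ * X) * Q by noncomm_ring, ← hX]
      exact hQDQ0
    have h2 : X * Q = 0 := by
      apply Matrix.conjTranspose_mul_self_eq_zero.mp
      rw [Matrix.conjTranspose_mul, hQherm.eq]
      exact h1
    rw [hX, Matrix.mul_assoc, h2, Matrix.mul_zero]
  have hDP : D * P = D := by
    have h := hDQ0
    rw [hQdef, Matrix.mul_sub, Matrix.mul_one, sub_eq_zero] at h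
    exact h.symm
  have hPD : P * D = D := by
    have h := congrArg Matrix.conjTranspose hDP
    rwa [Matrix.conjTranspose_mul, hPherm.eq, hD.1.eq] at h
  -- the pinching operator inequality D ≤ 2E via V D V = E + E - D
  set V : Matrix (Fin d) (Fin d) ℂ := q - q' with hVdef
  have hVherm : V.IsHermitian := hqherm.sub hq'herm
  have hVDVpsd : (V * D * V).PosSemidef := by
    have := hD.conjTranspose_mul_mul_same V
    rwa [hVherm.eq] at this
  have hVDV_eq : V * D * V = E + E - D := by
    rw [hVdef, hEdef, hq'def]
    noncomm_ring
  have hPPM : (P + P - M).PosSemidef := by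
    have h1 : R * (V * D * V) * R = P + P - M := by
      rw [hVDV_eq, show R * (E + E - D) * R = R * E * R + R * E * R - R * D * R by noncomm_ring,
        hRER, hMdef]
    rw [← h1]
    have := hVDVpsd.conjTranspose_mul_mul_same R
    rwa [hRherm.eq] at this
  have h2M : ((1 : Matrix (Fin d) (Fin d) ℂ) + 1 - M).PosSemidef := by
    have h1 : (1 : Matrix (Fin d) (Fin d) ℂ) + 1 - M = (P + P - M) + (Q + Q) := by
      rw [hQdef]
      abel
    rw [h1]
    exact hPPM.add (hQpsd.add hQpsd)
  -- K := 2M - M²  is PSD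
  set K : Matrix (Fin d) (Fin d) ℂ := M + M - M * M with hKdef
  have hKfun : K = mfun hM (fun x => (x + x) - x * x) := by
    have hMM : M * M = mfun hM (fun x => x * x) := by
      have := mfun_mul_mfun hM (fun x => x) (fun x => x)
      rwa [mfun_id hM] at this
    have hMa : M + M = mfun hM (fun x => x + x) := by
      have := mfun_add hM (fun x => x) (fun x => x)
      rwa [mfun_id hM] at this
    rw [hKdef, hMM, hMa, mfun_sub]
  have hKpsd : K.PosSemidef := by
    rw [hKfun]
    refine posSemidef_mfun hM _ fun i => ?_
    have h1 : 0 ≤ hM.eigenvalues i := hMpsd.eigenvalues_nonneg i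
    have h2 : hM.eigenvalues i ≤ 2 := eigenvalues_le_two hM h2M i
    nlinarith
  -- trace computations
  have htEM : (E * M).trace = 1 := by
    rw [hMdef, show E * (R * D * R) = (E * R * D) * R by noncomm_ring, Matrix.trace_mul_comm,
      show R * (E * R * D) = (R * E * R) * D by noncomm_ring, hRER, hPD, hDtr]
  have htEMM : (E * (M * M)).trace = ((D * D) * (R * R)).trace := by
    rw [hMdef, show E * ((R * D * R) * (R * D * R)) = (E * R * D * (R * R) * D) * R
      by noncomm_ring, Matrix.trace_mul_comm,
      show R * (E * R * D * (R * R) * D) = ((R * E * R) * D) * (R * R) * D by noncomm_ring,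
      hRER, hPD, Matrix.trace_mul_comm, show D * (D * (R * R)) = (D * D) * (R * R) by noncomm_ring]
  -- the χ²-type quantity
  set τ : ℝ := ∑ j, w j * (if 0 < μ j then (μ j)⁻¹ else 0) with hτdef
  have hg0g0 : ∀ x : ℝ, g0 x * g0 x = if 0 < x then x⁻¹ else 0 := by
    intro x
    by_cases hx : 0 < x
    · rw [hg0def]
      simp only [if_pos hx]
      rw [← mul_inv, Real.mul_self_sqrt hx.le]
    · rw [hg0def]
      simp only [if_neg hx]
      ring
  have htDDRR : ((D * D) * (R * R)).trace = ((τ : ℝ) : ℂ) := by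
    rw [hRdef, mfun_mul_mfun, trace_mul_mfun hE _ (D * D), hτdef]
    push_cast
    refine Finset.sum_congr rfl fun j _ => ?_
    rw [hwrep j, ← hμdef, ← Complex.ofReal_mul, hg0g0 (μ j)]
  have hEK : (E * K).trace = 1 + 1 - ((τ : ℝ) : ℂ) := by
    rw [hKdef, show E * (M + M - M * M) = E * M + E * M - E * (M * M) by noncomm_ring,
      Matrix.trace_sub, Matrix.trace_add, htEM, htEMM, htDDRR]
  have hτ2 : τ ≤ 2 := by
    have h := trace_mul_psd hEpsd hKpsd
    rw [hEK] at h
    have him : (1 + 1 - ((τ : ℝ) : ℂ)).re = 2 - τ := by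
      simp [Complex.sub_re, Complex.add_re]
      ring
    rw [him] at h
    linarith [h.2]
  -- entropies via eigenvalues
  have hvnE : vnEntropy E = -∑ j, μ j * Real.log (μ j) := by
    unfold vnEntropy
    rw [dif_pos hE, ← hμdef]
  have hvnD : vnEntropy D = -∑ k, ν k * Real.log (ν k) := by
    unfold vnEntropy
    rw [dif_pos hD.1, ← hνdef]
  -- Jensen setup
  have hlogconc : ConcaveOn ℝ (Set.Ioi 0) Real.log := strictConcaveOn_log_Ioi.concaveOn
  set wgt : Fin d × Fin d → ℝ := fun p => tt p.1 p.2 * ν p.2 with hwgt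
  set xx : Fin d × Fin d → ℝ := fun p => if 0 < μ p.1 ∧ 0 < ν p.2 then ν p.2 / μ p.1 else 1
    with hxx
  have hwgt0 : ∀ p ∈ (Finset.univ : Finset (Fin d × Fin d)), 0 ≤ wgt p := fun p _ =>
    mul_nonneg (htt0 _ _) (hν0 _)
  have hwgt1 : ∑ p : Fin d × Fin d, wgt p = 1 := by
    rw [Fintype.sum_prod_type]
    simpa [hcdef] using hsumc
  have hxpos : ∀ p ∈ (Finset.univ : Finset (Fin d × Fin d)), xx p ∈ Set.Ioi (0:ℝ) := by
    intro p _
    rw [hxx]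
    dsimp only
    split_ifs with h
    · exact Set.mem_Ioi.mpr (div_pos h.2 h.1)
    · exact Set.mem_Ioi.mpr one_pos
  have hJ := hlogconc.le_map_sum hwgt0 hwgt1 hxpos
  have hwz : ∀ j k, μ j = 0 → tt j k * ν k = 0 := by
    intro j k hj
    have h0 : (∑ k', tt j k' * ν k') = 0 := by
      have := hczero j hj
      simpa [hcdef] using this
    exact (Finset.sum_eq_zero_iff_of_nonneg (fun k' _ =>
      mul_nonneg (htt0 j k') (hν0 k'))).mp h0 k (Finset.mem_univ k)
  have hterm : ∀ j k, tt j k * ν k * (Real.log (ν k) - Real.log (μ j))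
      = wgt (j, k) * Real.log (xx (j, k)) := by
    intro j k
    by_cases hν : 0 < ν k
    · by_cases hμ : 0 < μ j
      · rw [hxx, hwgt]
        dsimp only
        rw [if_pos ⟨hμ, hν⟩, Real.log_div (ne_of_gt hν) (ne_of_gt hμ)]
      · have hμj : μ j = 0 := le_antisymm (not_lt.mp hμ) (hμ0 j)
        have h0 : tt j k * ν k = 0 := hwz j k hμj
        rw [hwgt]
        dsimp only
        rw [h0, zero_mul, zero_mul]
    · have hνk : ν k = 0 := le_antisymm (not_lt.mp hν) (hν0 k)
      rw [hwgt]
      dsimp only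
      rw [hνk, mul_zero, zero_mul, zero_mul]
  have hLHS : ∑ k, ν k * Real.log (ν k) - ∑ j, c j * Real.log (μ j)
      = ∑ p : Fin d × Fin d, wgt p * Real.log (xx p) := by
    have e1 : ∑ k, ν k * Real.log (ν k) = ∑ j, ∑ k, tt j k * ν k * Real.log (ν k) := by
      rw [Finset.sum_comm]
      refine Finset.sum_congr rfl fun k _ => ?_
      simp_rw [mul_assoc]
      rw [← Finset.sum_mul, hcol k, one_mul]
    have e2 : ∑ j, c j * Real.log (μ j) = ∑ j, ∑ k, tt j k * ν k * Real.log (μ j) := by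
      refine Finset.sum_congr rfl fun j _ => ?_
      simp only [hcdef]
      rw [Finset.sum_mul]
    rw [e1, e2, ← Finset.sum_sub_distrib, Fintype.sum_prod_type]
    refine Finset.sum_congr rfl fun j _ => ?_
    rw [← Finset.sum_sub_distrib]
    refine Finset.sum_congr rfl fun k _ => ?_
    rw [← mul_sub]
    exact hterm j k
  have hxsum : ∑ p : Fin d × Fin d, wgt p * xx p = τ := by
    rw [Fintype.sum_prod_type, hτdef]
    refine Finset.sum_congr rfl fun j _ => ?_
    by_cases hμ : 0 < μ j
    · rw [if_pos hμ]
      simp only [hwdef]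
      rw [Finset.sum_mul]
      refine Finset.sum_congr rfl fun k _ => ?_
      by_cases hν : 0 < ν k
      · rw [hwgt, hxx]
        dsimp only
        rw [if_pos ⟨hμ, hν⟩]
        field_simp
      · have hνk : ν k = 0 := le_antisymm (not_lt.mp hν) (hν0 k)
        rw [hwgt]
        dsimp only
        rw [hνk]
        ring
    · rw [if_neg hμ, mul_zero]
      have hμj : μ j = 0 := le_antisymm (not_lt.mp hμ) (hμ0 j)
      refine Finset.sum_eq_zero fun k _ => ?_
      have h0 := hwz j k hμj
      rw [hwgt]
      dsimp only
      rw [h0, zero_mul]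
  have hτ0 : 0 ≤ τ := by
    rw [hτdef]
    refine Finset.sum_nonneg fun j _ => mul_nonneg (hw0 j) ?_
    by_cases h0 : 0 < μ j
    · rw [if_pos h0]
      positivity
    · rw [if_neg h0]
  have hlog2 : Real.log (∑ p : Fin d × Fin d, wgt p * xx p) ≤ Real.log 2 := by
    rw [hxsum]
    rcases eq_or_lt_of_le hτ0 with h | h
    · rw [← h, Real.log_zero]
      exact Real.log_nonneg one_le_two
    · exact Real.log_le_log h hτ2
  have hJ2 : ∑ k, ν k * Real.log (ν k) - ∑ j, c j * Real.log (μ j) ≤ Real.log 2 := by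
    rw [hLHS]
    calc ∑ p : Fin d × Fin d, wgt p * Real.log (xx p)
        ≤ Real.log (∑ p : Fin d × Fin d, wgt p * xx p) := by
          simpa [smul_eq_mul] using hJ
      _ ≤ Real.log 2 := hlog2
  have hkey := hstar Real.log
  rw [hvnE, hvnD]
  linarith [hJ2, hkey]
end

section
/- (Concavity of the Holevo information in the input distribution.) Let X be a finite set and (D_x)_{x∈X} a fixed family of density matrices in M_d(ℂ). For a probability distribution p on X set χ(p) := S(∑_x p(x) D_x) − ∑_x p(x) S(D_x). Then for any finitely many probability distributions p_1,…,p_k on X and nonnegative weights λ_1,…,λ_k with ∑_i λ_i = 1, one has χ(∑_i λ_i p_i) ≥ ∑_i λ_i χ(p_i). -/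
/-!
Only the entropy term of `χ` is nonlinear in `p`, and it is the von Neumann entropy composed with
the linear map `p ↦ ∑ₓ p(x) Dₓ`; so it suffices that `S` is concave on positive semidefinite
matrices. Diagonalize `s a + t b` by a unitary `W`: its eigenvalues are the mixtures
`s (W⋆aW)ⱼⱼ + t (W⋆bW)ⱼⱼ`, so concavity of `η(x) = -x log x` reduces the claim to
`S(a) ≤ ∑ⱼ η((W⋆aW)ⱼⱼ)`. That holds because the diagonal of `a` in any orthonormal basis is the
image of its spectrum under the doubly stochastic matrix `(|Vⱼₖ|²)` of a unitary `V`, and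
`∑ η` does not decrease under doubly stochastic maps by Jensen.
-/

open scoped ComplexOrder

/-- The Holevo information `χ(p) = S(∑ₓ p(x) Dₓ) - ∑ₓ p(x) S(Dₓ)` of a probability
distribution `p` with respect to a fixed family of density matrices `D`. -/
noncomputable def holevoInfo {X : Type*} [Fintype X] {d : ℕ}
    (D : X → Matrix (Fin d) (Fin d) ℂ) (p : X → ℝ) : ℝ :=
  vnEntropy (∑ x, p x • D x) - ∑ x, p x * vnEntropy (D x)

open Matrix Real

section

variable {n : Type*}

theorem convex_setOf_posSemidef : Convex ℝ {a : Matrix n n ℂ | a.PosSemidef} :=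
  fun _ ha _ hb _ _ hs ht _ => (ha.smul hs).add (hb.smul ht)

variable [Fintype n]

theorem Matrix.PosSemidef.re_star_mul_mul_apply_self_nonneg {a : Matrix n n ℂ}
    (ha : a.PosSemidef) (W : Matrix n n ℂ) (j : n) : 0 ≤ ((star W * a * W) j j).re :=
  (Complex.nonneg_iff.mp (ha.conjTranspose_mul_mul_same W).diag_nonneg).1

variable [DecidableEq n]

theorem ConcaveOn.sum_le_sum_mulVec_of_mem_doublyStochastic {s : Set ℝ} {f : ℝ → ℝ}
    (hf : ConcaveOn ℝ s f) {M : Matrix n n ℝ} (hM : M ∈ doublyStochastic ℝ n) {x : n → ℝ}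
    (hx : ∀ i, x i ∈ s) :
    ∑ i, f (x i) ≤ ∑ i, f ((M *ᵥ x) i) :=
  calc ∑ j, f (x j) = ∑ i, ∑ j, M i j * f (x j) := by
        rw [Finset.sum_comm]
        simp_rw [← Finset.sum_mul, sum_col_of_mem_doublyStochastic hM, one_mul]
    _ ≤ ∑ i, f (∑ j, M i j * x j) := Finset.sum_le_sum fun i _ => by
        simpa only [smul_eq_mul] using
          hf.le_map_sum (fun j _ => nonneg_of_mem_doublyStochastic hM)
            (sum_row_of_mem_doublyStochastic hM i) fun j _ => hx j
    _ = ∑ i, f ((M *ᵥ x) i) := rfl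

theorem Matrix.normSq_mem_doublyStochastic {U : Matrix n n ℂ} (hU : U ∈ unitaryGroup n ℂ) :
    of (fun i j => Complex.normSq (U i j)) ∈ doublyStochastic ℝ n := by
  have row_sum {V : Matrix n n ℂ} (hV : V ∈ unitaryGroup n ℂ) (i : n) :
      ∑ j, Complex.normSq (V i j) = 1 := by
    have := congr_arg (fun M : Matrix n n ℂ => (M i i).re) (mem_unitaryGroup_iff.mp hV)
    simpa [mul_apply, Complex.mul_conj, Complex.re_sum] using this
  refine mem_doublyStochastic.mpr ⟨fun i j => Complex.normSq_nonneg _, ?_, ?_⟩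
  · ext i
    simpa [mulVec, dotProduct] using row_sum hU i
  · ext j
    simpa [vecMul, dotProduct] using row_sum (Unitary.star_mem hU) j

theorem Matrix.re_mul_diagonal_mul_star_apply_self (V : Matrix n n ℂ) (p : n → ℝ) (j : n) :
    ((V * diagonal (RCLike.ofReal ∘ p : n → ℂ) * star V) j j).re =
      (of (fun i k => Complex.normSq (V i k)) *ᵥ p) j := by
  rw [mul_apply, Complex.re_sum]
  simp only [mul_diagonal, star_apply, Complex.star_def, Function.comp_apply, mulVec, dotProduct,
    of_apply]
  refine Finset.sum_congr rfl fun k _ => ?_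
  rw [mul_right_comm, Complex.mul_conj]
  simp

theorem Matrix.IsHermitian.re_star_eigenvectorUnitary_mul_mul_apply_self {a : Matrix n n ℂ}
    (ha : a.IsHermitian) (j : n) :
    ((star (ha.eigenvectorUnitary : Matrix n n ℂ) * a * ha.eigenvectorUnitary) j j).re =
      ha.eigenvalues j := by
  have := ha.conjStarAlgAut_star_eigenvectorUnitary
  rw [Unitary.conjStarAlgAut_apply, Unitary.coe_star, star_star] at this
  simp [this]

theorem vnEntropy_eq_sum_negMulLog {a : Matrix n n ℂ} (ha : a.IsHermitian) :
    vnEntropy a = ∑ i, negMulLog (ha.eigenvalues i) := by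
  simp only [vnEntropy, dif_pos ha, negMulLog, ← Finset.sum_neg_distrib, neg_mul]

theorem vnEntropy_le_sum_negMulLog_re_diag {a : Matrix n n ℂ} (ha : a.PosSemidef)
    {W : Matrix n n ℂ} (hW : W ∈ unitaryGroup n ℂ) :
    vnEntropy a ≤ ∑ j, negMulLog ((star W * a * W) j j).re := by
  set U : Matrix n n ℂ := ↑ha.1.eigenvectorUnitary
  have hV : star W * U ∈ unitaryGroup n ℂ :=
    Submonoid.mul_mem _ (Unitary.star_mem hW) ha.1.eigenvectorUnitary.2
  have hconj : star W * a * W =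
      (star W * U) * diagonal (RCLike.ofReal ∘ ha.1.eigenvalues) * star (star W * U) := by
    conv_lhs => rw [ha.1.spectral_theorem]
    simp only [Unitary.conjStarAlgAut_apply, star_mul, star_star, Matrix.mul_assoc, U]
  rw [vnEntropy_eq_sum_negMulLog ha.1, hconj]
  simp_rw [re_mul_diagonal_mul_star_apply_self]
  exact concaveOn_negMulLog.sum_le_sum_mulVec_of_mem_doublyStochastic
    (normSq_mem_doublyStochastic hV) fun i => Set.mem_Ici.mpr (ha.eigenvalues_nonneg i)

theorem concaveOn_vnEntropy : ConcaveOn ℝ {a : Matrix n n ℂ | a.PosSemidef} vnEntropy := by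
  refine ⟨convex_setOf_posSemidef, fun a ha b hb s t hs ht hst => ?_⟩
  have hc := (convex_setOf_posSemidef ha hb hs ht hst : (s • a + t • b).PosSemidef).1
  set W : Matrix n n ℂ := ↑hc.eigenvectorUnitary
  have hW : W ∈ unitaryGroup n ℂ := hc.eigenvectorUnitary.2
  have eigenvalues_eq (j : n) : hc.eigenvalues j =
      s * ((star W * a * W) j j).re + t * ((star W * b * W) j j).re := by
    rw [← hc.re_star_eigenvectorUnitary_mul_mul_apply_self]
    simp [W, Matrix.mul_add, Matrix.add_mul]
  calc s • vnEntropy a + t • vnEntropy b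
      ≤ s • ∑ j, negMulLog ((star W * a * W) j j).re +
          t • ∑ j, negMulLog ((star W * b * W) j j).re := by
        gcongr
        exacts [vnEntropy_le_sum_negMulLog_re_diag ha hW, vnEntropy_le_sum_negMulLog_re_diag hb hW]
    _ ≤ ∑ j, negMulLog (s * ((star W * a * W) j j).re + t * ((star W * b * W) j j).re) := by
        simp only [smul_eq_mul, Finset.mul_sum, ← Finset.sum_add_distrib]
        refine Finset.sum_le_sum fun j _ => ?_
        simpa only [smul_eq_mul] using concaveOn_negMulLog.2
          (ha.re_star_mul_mul_apply_self_nonneg W j) (hb.re_star_mul_mul_apply_self_nonneg W j)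
          hs ht hst
    _ = vnEntropy (s • a + t • b) := by
        simp only [vnEntropy_eq_sum_negMulLog hc, eigenvalues_eq]

end

theorem concaveOn_holevoInfo {X : Type*} [Fintype X] {d : ℕ} {D : X → Matrix (Fin d) (Fin d) ℂ}
    (hD : ∀ x, (D x).PosSemidef) : ConcaveOn ℝ {p : X → ℝ | ∀ x, 0 ≤ p x} (holevoInfo D) := by
  have hS : ConcaveOn ℝ {p : X → ℝ | ∀ x, 0 ≤ p x} fun p => vnEntropy (∑ x, p x • D x) :=
    (concaveOn_vnEntropy.comp_linearMap (Fintype.linearCombination ℝ D)).subset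
      (fun p hp => posSemidef_sum _ fun x _ => (hD x).smul (hp x)) (convex_Ici 0)
  exact hS.sub ((Fintype.linearCombination ℝ fun x => vnEntropy (D x)).convexOn hS.1)

theorem holevo_concave_general {X : Type*} [Fintype X] {d k : ℕ}
    (D : X → Matrix (Fin d) (Fin d) ℂ)
    (hD : ∀ x, (D x).PosSemidef)
    (p : Fin k → X → ℝ) (hp : ∀ i x, 0 ≤ p i x)
    (lam : Fin k → ℝ) (hlam : ∀ i, 0 ≤ lam i) (hlam1 : ∑ i, lam i = 1) :
    ∑ i, lam i * holevoInfo D (p i) ≤ holevoInfo D (fun x => ∑ i, lam i * p i x) := by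
  have h := (concaveOn_holevoInfo hD).le_map_sum (t := Finset.univ) (fun i _ => hlam i) hlam1
    fun i _ => hp i
  have hmix : (fun x => ∑ i, lam i * p i x) = ∑ i, lam i • p i := by
    ext x
    simp
  simpa only [hmix, smul_eq_mul] using h

/-- Concavity of the Holevo information in the input distribution: for probability
distributions `p₁, …, p_k` and convex weights `λ₁, …, λ_k`,
`χ(∑ᵢ λᵢ pᵢ) ≥ ∑ᵢ λᵢ χ(pᵢ)`. -/
theorem holevo_concave {X : Type*} [Fintype X] {d k : ℕ}
    (D : X → Matrix (Fin d) (Fin d) ℂ)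
    (hD : ∀ x, (D x).PosSemidef) (hDtr : ∀ x, (D x).trace = 1)
    (p : Fin k → X → ℝ) (hp : ∀ i x, 0 ≤ p i x) (hp1 : ∀ i, ∑ x, p i x = 1)
    (lam : Fin k → ℝ) (hlam : ∀ i, 0 ≤ lam i) (hlam1 : ∑ i, lam i = 1) :
    ∑ i, lam i * holevoInfo D (p i) ≤ holevoInfo D (fun x => ∑ i, lam i * p i x) :=
  holevo_concave_general D hD p hp lam hlam hlam1
end
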